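/- arXiv:1610.08459 — 4 statements merged into one kernel-verified Lean document; each statement's English description precedes it below -/
import Mathlib

section
/- Let λ be a regular cardinal such that F(k) is λ-presentable in C for every object k of K. Let (X, E) be a marked object such that X is λ-presentable in C and the total cardinality of E (i.e., the cardinality of the disjoint union of the sets E(k) over objects k of K) is less than λ. Then (X, E) is a λ-presentable object of the category C^m of marked objects. -/
open CategoryTheory Limits

universe w v u

/-- A `K`-marked object of `C`: an object together with a subfunctor of `Hom(F(-), X)`. -/
structure MarkedObj {C : Type u} [Category.{v} C] {K : Type w} [Category.{v} K]
    (F : K ⥤ C) where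
  pt : C
  marked : ∀ k : K, Set (F.obj k ⟶ pt)
  comp_mem : ∀ {k k' : K} (g : k ⟶ k') {f : F.obj k' ⟶ pt},
    f ∈ marked k' → F.map g ≫ f ∈ marked k

namespace MarkedObj

variable {C : Type u} [Category.{v} C] {K : Type w} [Category.{v} K] {F : K ⥤ C}

/-- Morphisms of marked objects preserve marked maps. -/
@[ext]
structure Hom (A B : MarkedObj F) where
  hom : A.pt ⟶ B.pt
  pres : ∀ ⦃k : K⦄ ⦃e : F.obj k ⟶ A.pt⦄, e ∈ A.marked k → e ≫ hom ∈ B.marked k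

instance : Category (MarkedObj F) where
  Hom := Hom
  id A := ⟨𝟙 _, fun k e he => by simpa using he⟩
  comp f g := ⟨f.hom ≫ g.hom, fun k e he => by
    simpa [Category.assoc] using g.pres (f.pres he)⟩
  id_comp f := by apply Hom.ext; simp [CategoryStruct.id, CategoryStruct.comp]
  comp_id f := by apply Hom.ext; simp [CategoryStruct.id, CategoryStruct.comp]
  assoc f g h := by apply Hom.ext; simp [CategoryStruct.comp]

@[simp] lemma id_hom (A : MarkedObj F) : Hom.hom (𝟙 A) = 𝟙 A.pt := rfl
@[simp] lemma comp_hom {A B D : MarkedObj F} (f : A ⟶ B) (g : B ⟶ D) :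
    (f ≫ g).hom = f.hom ≫ g.hom := rfl

/-- The forgetful functor. -/
def forget (F : K ⥤ C) : MarkedObj F ⥤ C where
  obj A := A.pt
  map f := f.hom

/-- The flat marked object: no maps are marked. -/
def flatObj (F : K ⥤ C) (X : C) : MarkedObj F :=
  ⟨X, fun _ => ∅, by intro k k' g f h; exact h.elim⟩

/-- The flat functor, left adjoint to `forget`. -/
def flat (F : K ⥤ C) : C ⥤ MarkedObj F where
  obj X := flatObj F X
  map f := ⟨f, by intro k e h; exact h.elim⟩

/-- The sharp marked object: all maps are marked. -/
def sharpObj (F : K ⥤ C) (X : C) : MarkedObj F :=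
  ⟨X, fun _ => Set.univ, by intro k k' g f _; trivial⟩

/-- The sharp functor, right adjoint to `forget`. -/
def sharp (F : K ⥤ C) : C ⥤ MarkedObj F where
  obj X := sharpObj F X
  map f := ⟨f, by intro k e _; trivial⟩

end MarkedObj


/-- A category `J` is `κ`-filtered if every diagram indexed by a category with fewer
than `κ` objects and fewer than `κ` morphisms admits a cocone. -/
def IsCardFiltered (J : Type v) [Category.{v} J] (κ : Cardinal.{v}) : Prop :=
  ∀ (A : Type v) (_ : SmallCategory A), Cardinal.mk A < κ →
    Cardinal.mk (Σ a b : A, a ⟶ b) < κ →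
    ∀ G : A ⥤ J, Nonempty (Limits.Cocone G)

/-- An object `X` is `κ`-presentable if `Hom(X, -)` preserves `κ`-filtered colimits. -/
def IsPresentableObj {C : Type u} [Category.{v} C] (κ : Cardinal.{v}) (X : C) : Prop :=
  ∀ (J : Type v) (_ : SmallCategory J), IsCardFiltered J κ →
    Nonempty (PreservesColimitsOfShape J (coyoneda.obj (Opposite.op X)))

/-- A category is locally presentable if it is cocomplete and, for some regular
cardinal `κ`, there is a (small) set of `κ`-presentable objects such that every
object is a `κ`-filtered colimit of objects from this set. -/
def LocallyPresentable (C : Type u) [Category.{v} C] : Prop :=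
  HasColimits C ∧ ∃ κ : Cardinal.{v}, κ.IsRegular ∧ ∃ S : Set C, Small.{v} S ∧
    (∀ X ∈ S, IsPresentableObj κ X) ∧
    ∀ X : C, ∃ (J : Type v) (_ : SmallCategory J) (D : J ⥤ C) (c : Cocone D)
      (_ : IsColimit c), IsCardFiltered J κ ∧ (∀ j, D.obj j ∈ S) ∧ c.pt = X

/-!
The forgetful functor to `C` has the right adjoint `sharp`, so it preserves colimits, and the
marked maps of a colimit of marked objects are exactly the composites of marked maps of the
stages with the colimit legs. A map `(X, E) ⟶ colim Gⱼ` therefore lifts on underlying objects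
to some stage because `X` is `λ`-presentable; each of its marked maps becomes marked at a later
stage because the `F(k)` are `λ`-presentable, and as there are fewer than `λ` of them a single
stage serves them all. Essential uniqueness of the lift is inherited from `X`.
-/

open Opposite

universe w'

lemma IsCardFiltered.isCardinalFiltered {J : Type v} [SmallCategory J] {κ : Cardinal.{v}}
    [Fact κ.IsRegular] (hJ : IsCardFiltered J κ) : IsCardinalFiltered J κ where
  nonempty_cocone {A} _ G hA := by
    refine hJ A _ ((hasCardinalLT_iff_cardinal_mk_lt _ κ).mp
      (hasCardinalLT_of_hasCardinalLT_arrow hA)) ?_ G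
    rw [← Cardinal.mk_congr (Arrow.equivSigma A), ← hasCardinalLT_iff_cardinal_mk_lt]
    exact hA

namespace MarkedObj

variable {C : Type u} [Category.{v} C] {K : Type w} [Category.{v} K] {F : K ⥤ C}

variable (F) in
def forgetAdjSharp : forget F ⊣ sharp F :=
  Adjunction.mkOfHomEquiv
    { homEquiv := fun A X =>
        { toFun := fun f => ⟨f, fun _ _ _ => trivial⟩
          invFun := fun g => g.hom
          left_inv := fun _ => rfl
          right_inv := fun _ => rfl } }

instance : (forget F).IsLeftAdjoint := (forgetAdjSharp F).isLeftAdjoint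

section Colimits

variable {J : Type*} [Category J] {G : J ⥤ MarkedObj F}

@[simp]
lemma cocone_w_hom (c : Cocone G) {i j : J} (f : i ⟶ j) :
    (G.map f).hom ≫ (c.ι.app j).hom = (c.ι.app i).hom := by
  rw [← comp_hom, c.w]

def coconeOfMarkedLegs (c : Cocone G) : Cocone G where
  pt :=
    { pt := c.pt.pt
      marked := fun k => {e | ∃ j, ∃ m ∈ (G.obj j).marked k, e = m ≫ (c.ι.app j).hom}
      comp_mem := by
        rintro k k' g f ⟨j, m, hm, rfl⟩
        exact ⟨j, F.map g ≫ m, (G.obj j).comp_mem g hm, by simp⟩ }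
  ι :=
    { app := fun j => ⟨(c.ι.app j).hom, fun _ e he => ⟨j, e, he, rfl⟩⟩
      naturality := fun _ _ f => Hom.ext (by simp) }

lemma exists_marked_factorization_of_isColimit {c : Cocone G} (hc : IsColimit c) {k : K}
    {e : F.obj k ⟶ c.pt.pt} (he : e ∈ c.pt.marked k) :
    ∃ j, ∃ m ∈ (G.obj j).marked k, e = m ≫ (c.ι.app j).hom := by
  -- the colimit is marked no more than `coconeOfMarkedLegs c`, as the descent has identity `hom`
  have hid : (hc.desc (coconeOfMarkedLegs c)).hom = 𝟙 c.pt.pt :=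
    (isColimitOfPreserves (forget F) hc).hom_ext fun j =>
      (congrArg Hom.hom (hc.fac _ j)).trans (Category.comp_id _).symm
  obtain ⟨j, m, hm, hme⟩ := (hc.desc (coconeOfMarkedLegs c)).pres he
  refine ⟨j, m, hm, Eq.trans ?_ hme⟩
  rw [hid]
  exact (Category.comp_id e).symm

end Colimits

section FilteredColimits

variable {J : Type v} [SmallCategory J] {G : J ⥤ MarkedObj F} {c : Cocone G} (hc : IsColimit c)
include hc

lemma exists_hom_comp_ι_hom_eq {Y : C}
    [PreservesColimitsOfShape J (coyoneda.obj (op Y))] (f : Y ⟶ c.pt.pt) :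
    ∃ (j : J) (g : Y ⟶ (G.obj j).pt), g ≫ (c.ι.app j).hom = f :=
  Types.jointly_surjective _
    (isColimitOfPreserves (coyoneda.obj (op Y)) (isColimitOfPreserves (forget F) hc)) f

lemma exists_hom_comp_map_hom_eq [IsFiltered J] {Y : C}
    [PreservesColimitsOfShape J (coyoneda.obj (op Y))]
    {a b : J} {ya : Y ⟶ (G.obj a).pt} {yb : Y ⟶ (G.obj b).pt}
    (h : ya ≫ (c.ι.app a).hom = yb ≫ (c.ι.app b).hom) :
    ∃ (d : J) (f : a ⟶ d) (g : b ⟶ d), ya ≫ (G.map f).hom = yb ≫ (G.map g).hom :=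
  (Types.FilteredColimit.isColimit_eq_iff _
    (isColimitOfPreserves (coyoneda.obj (op Y)) (isColimitOfPreserves (forget F) hc))).mp h

lemma exists_comp_map_eq [IsFiltered J] {X : MarkedObj F}
    [PreservesColimitsOfShape J (coyoneda.obj (op X.pt))]
    {a b : J} {ga : X ⟶ G.obj a} {gb : X ⟶ G.obj b} (h : ga ≫ c.ι.app a = gb ≫ c.ι.app b) :
    ∃ (d : J) (f : a ⟶ d) (g : b ⟶ d), ga ≫ G.map f = gb ≫ G.map g := by
  obtain ⟨d, f, g, hfg⟩ := exists_hom_comp_map_hom_eq hc (congrArg Hom.hom h)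
  exact ⟨d, f, g, Hom.ext hfg⟩

lemma exists_comp_map_hom_mem_marked [IsFiltered J] {k : K}
    [PreservesColimitsOfShape J (coyoneda.obj (op (F.obj k)))]
    {j : J} {e : F.obj k ⟶ (G.obj j).pt} (he : e ≫ (c.ι.app j).hom ∈ c.pt.marked k) :
    ∃ (d : J) (u : j ⟶ d), e ≫ (G.map u).hom ∈ (G.obj d).marked k := by
  obtain ⟨j', m, hm, hme⟩ := exists_marked_factorization_of_isColimit hc he
  obtain ⟨d, u, v, huv⟩ := exists_hom_comp_map_hom_eq hc hme
  exact ⟨d, u, huv ▸ (G.map v).pres hm⟩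

lemma exists_comp_ι_eq {κ : Cardinal.{w'}} [Fact κ.IsRegular] [IsCardinalFiltered J κ]
    {X : MarkedObj F} [PreservesColimitsOfShape J (coyoneda.obj (op X.pt))]
    [∀ k, PreservesColimitsOfShape J (coyoneda.obj (op (F.obj k)))]
    (hX : HasCardinalLT (Σ k, X.marked k) κ) (f : X ⟶ c.pt) :
    ∃ (j : J) (g : X ⟶ G.obj j), g ≫ c.ι.app j = f := by
  have := isFiltered_of_isCardinalFiltered J κ
  obtain ⟨j₀, h₀, hh₀⟩ := exists_hom_comp_ι_hom_eq hc f.hom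
  have hmarked (s : Σ k, X.marked k) : ∃ (d : J) (u : j₀ ⟶ d),
      (s.2.1 ≫ h₀) ≫ (G.map u).hom ∈ (G.obj d).marked s.1 :=
    exists_comp_map_hom_mem_marked hc (by simpa [hh₀] using f.pres s.2.2)
  choose d u hu using hmarked
  -- there are fewer than `κ` marked maps, so one stage makes all of them marked at once
  obtain ⟨t, a, b, hab⟩ := IsCardinalFiltered.wideSpan u hX
  refine ⟨t, ⟨h₀ ≫ (G.map b).hom, fun k e he => ?_⟩,
    Hom.ext (by rw [comp_hom, Category.assoc, cocone_w_hom, hh₀])⟩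
  rw [← hab ⟨k, e, he⟩, G.map_comp, comp_hom]
  simpa using (G.map (a _)).pres (hu ⟨k, e, he⟩)

end FilteredColimits

lemma preservesColimitsOfShape_coyoneda {κ : Cardinal.{w'}} [Fact κ.IsRegular]
    (J : Type v) [SmallCategory J] [IsCardinalFiltered J κ] (X : MarkedObj F)
    [PreservesColimitsOfShape J (coyoneda.obj (op X.pt))]
    [∀ k, PreservesColimitsOfShape J (coyoneda.obj (op (F.obj k)))]
    (hX : HasCardinalLT (Σ k, X.marked k) κ) :
    PreservesColimitsOfShape J (coyoneda.obj (op X)) := by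
  have := isFiltered_of_isCardinalFiltered J κ
  refine ⟨fun {G} => ⟨fun {c} hc => ⟨Types.FilteredColimit.isColimitOf _ _ (fun f => ?_)
    (fun _ _ _ _ h => exists_comp_map_eq hc h)⟩⟩⟩
  obtain ⟨j, g, hg⟩ := exists_comp_ι_eq hc hX f
  exact ⟨j, g, hg.symm⟩

end MarkedObj

theorem markedObj_presentableObj_general {C : Type u} [Category.{v} C] {K : Type v}
    [SmallCategory K] (F : K ⥤ C)
    (l : Cardinal.{v}) (hl : l.IsRegular)
    (hF : ∀ k : K, IsPresentableObj l (F.obj k))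
    (X : MarkedObj F) (hX : IsPresentableObj l X.pt)
    (hE : Cardinal.mk (Σ k : K, X.marked k) < l) :
    IsPresentableObj l X := by
  intro J _ hJ
  have : Fact l.IsRegular := ⟨hl⟩
  have := hJ.isCardinalFiltered
  have := (hX J _ hJ).some
  have := fun k => (hF k J _ hJ).some
  exact ⟨MarkedObj.preservesColimitsOfShape_coyoneda J X
    ((hasCardinalLT_iff_cardinal_mk_lt _ l).mpr hE)⟩

/-- let `λ` be a regular cardinal such that every `F(k)` is
`λ`-presentable.  If `(X, E)` is a marked object with `X` `λ`-presentable and the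
total number of marked maps less than `λ`, then `(X, E)` is `λ`-presentable in the
category of marked objects. -/
theorem markedObj_presentableObj {C : Type u} [Category.{v} C] {K : Type v}
    [SmallCategory K] (F : K ⥤ C) (hC : LocallyPresentable C)
    (l : Cardinal.{v}) (hl : l.IsRegular)
    (hF : ∀ k : K, IsPresentableObj l (F.obj k))
    (X : MarkedObj F) (hX : IsPresentableObj l X.pt)
    (hE : Cardinal.mk (Σ k : K, X.marked k) < l) :
    IsPresentableObj l X :=
  markedObj_presentableObj_general F l hl hF X hX hE
end

section
/- Let f : (X, E) → (Y, E') be a morphism of marked objects such that the underlying morphism U(f) : X → Y is an isomorphism in C. Then f is a pushout (in C^m) of the morphism ∐_{(k,e) ∈ E'} F(k)^♭ → ∐_{(k,e) ∈ E'} (F(k), G{id_{F(k)}}) along the map ∐_{(k,e) ∈ E'} F(k)^♭ → (X, E) induced by the maps F(k) → Y ≅ X for (k, e) ranging over marked maps e : F(k) → Y of (Y, E'). -/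
open CategoryTheory Limits

universe w v u

namespace MarkedObj

variable {C : Type u} [Category.{v} C] {K : Type v} [SmallCategory K] (F : K ⥤ C)

/-- `F(k)` together with the subfunctor of `Hom(F(-), F(k))` generated by the
identity map. -/
def markedId (k : K) : MarkedObj F where
  pt := F.obj k
  marked k' := {f | ∃ g : k' ⟶ k, F.map g = f}
  comp_mem := by
    rintro a b g f ⟨g', rfl⟩
    exact ⟨g ≫ g', by simp⟩

variable [HasColimits C]

/-- The coproduct of a family of marked objects, computed as in `C`, with a map
marked iff it factors through a marked map into one of the summands. -/
noncomputable def sigmaMarked {ι : Type v} (A : ι → MarkedObj F) : MarkedObj F where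
  pt := ∐ fun i => (A i).pt
  marked k := {f | ∃ (i : ι) (e : F.obj k ⟶ (A i).pt),
    e ∈ (A i).marked k ∧ f = e ≫ Sigma.ι (fun i => (A i).pt) i}
  comp_mem := by
    rintro k k' g f ⟨i, e, he, rfl⟩
    exact ⟨i, F.map g ≫ e, (A i).comp_mem g he, by simp⟩

end MarkedObj

namespace MarkedObj

variable {C : Type u} [Category.{v} C] {K : Type w} [Category.{v} K] {F : K ⥤ C}

/-- Since both vertical sides are isomorphisms in `C`, the induced map out of `Y` can only be
`inv f.hom ≫ s.inl.hom`; it preserves markings because every marking of `Y` lifts along `bottom`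
to a marking of `B`, which `s.inr` preserves. -/
lemma isPushout_of_isIso_hom {A B X Y : MarkedObj F} {top : A ⟶ X} {left : A ⟶ B}
    {f : X ⟶ Y} {bottom : B ⟶ Y} (w : top ≫ f = left ≫ bottom)
    [hleft : IsIso left.hom] [IsIso f.hom]
    (lift_marked : ∀ ⦃k : K⦄ ⦃e : F.obj k ⟶ Y.pt⦄, e ∈ Y.marked k →
      ∃ e' ∈ B.marked k, e' ≫ bottom.hom = e) :
    IsPushout top left f bottom := by
  have bottom_inv : bottom.hom ≫ inv f.hom = inv left.hom ≫ top.hom := by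
    rw [IsIso.comp_inv_eq, Category.assoc, ← comp_hom, w, comp_hom, IsIso.inv_hom_id_assoc]
  have factor (s : PushoutCocone top left) : bottom.hom ≫ inv f.hom ≫ s.inl.hom = s.inr.hom := by
    rw [← Category.assoc, bottom_inv, Category.assoc, ← comp_hom, s.condition, comp_hom,
      IsIso.inv_hom_id_assoc]
  refine IsPushout.of_isColimit' ⟨w⟩ <| PushoutCocone.IsColimit.mk _
    (fun s => ⟨inv f.hom ≫ s.inl.hom, ?_⟩) (fun s => ?_) (fun s => ?_) (fun s m hl _ => ?_)
  · rintro k _ he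
    obtain ⟨e', he', rfl⟩ := lift_marked he
    simpa only [Category.assoc, factor] using s.inr.pres he'
  · exact Hom.ext (IsIso.hom_inv_id_assoc _ _)
  · exact Hom.ext (factor s)
  · exact Hom.ext (by simp only [← hl, comp_hom, IsIso.inv_hom_id_assoc])

end MarkedObj

open MarkedObj in
/-- a map `f : (X, E) ⟶ (Y, E')` of marked objects which is an
isomorphism on underlying objects is a pushout of the map
`∐_{(k,e) ∈ E'} F(k)^♭ ⟶ ∐_{(k,e) ∈ E'} (F(k), G{id})` along the map
`∐_{(k,e) ∈ E'} F(k)^♭ ⟶ (X, E)` induced by the maps `F(k) ⟶ Y ≅ X`. -/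
theorem markedObj_iso_is_pushout {C : Type u} [Category.{v} C] [HasColimits C]
    {K : Type v} [SmallCategory K] (F : K ⥤ C)
    (X Y : MarkedObj F) (f : X ⟶ Y) (hf : IsIso f.hom) :
    letI ι : Type v := Σ k : K, Y.marked k
    letI P₁ : MarkedObj F := sigmaMarked F (fun i : ι => markedId F i.1)
    letI P₀ : MarkedObj F := flatObj F P₁.pt
    letI top : P₀ ⟶ X :=
      ⟨Sigma.desc (fun i : ι => (i.2 : F.obj i.1 ⟶ Y.pt) ≫ inv f.hom),
        by intro k e h; exact h.elim⟩
    letI left : P₀ ⟶ P₁ := ⟨𝟙 P₁.pt, by intro k e h; exact h.elim⟩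
    letI bottom : P₁ ⟶ Y :=
      ⟨Sigma.desc (fun i : ι => (i.2 : F.obj i.1 ⟶ Y.pt)),
        by rintro k e ⟨i, e', ⟨g, rfl⟩, rfl⟩
           show (F.map g ≫ Sigma.ι (fun i : ι => F.obj i.1) i) ≫
             Sigma.desc (fun i : ι => (i.2 : F.obj i.1 ⟶ Y.pt)) ∈ Y.marked k
           rw [Category.assoc, Sigma.ι_desc]
           exact Y.comp_mem g i.2.2⟩
    IsPushout top left f bottom := by
  refine isPushout_of_isIso_hom (hleft := IsIso.id _) (Hom.ext ?_) ?_
  · show Sigma.desc (fun i : Σ k, Y.marked k => (i.2 : F.obj i.1 ⟶ Y.pt) ≫ inv f.hom) ≫ f.hom =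
      𝟙 _ ≫ Sigma.desc (fun i : Σ k, Y.marked k => (i.2 : F.obj i.1 ⟶ Y.pt))
    ext
    simp
  · intro k e he
    refine ⟨Sigma.ι (fun i : Σ k, Y.marked k => F.obj i.1) ⟨k, e, he⟩, ?_, Sigma.ι_desc _ _⟩
    exact ⟨⟨k, e, he⟩, 𝟙 _, ⟨𝟙 k, F.map_id k⟩, (Category.id_comp _).symm⟩
end

section
/- Let I be a class of morphisms of C containing all morphisms of the form in I^m below, and suppose f : (X,E) → (Y,E') is a morphism of marked objects such that U(f) is a retract of a relative I-cell complex X → Z in C (i.e., U(f) is a retract in the arrow category). Define Z' to be the marked object with underlying object Z in which a map F(k) → Z is marked if and only if it factors through Y → Z as a marked map of (Y, E') composed with Y → Z. Then f is a retract, in the arrow category of C^m, of the morphism (X, E) → Z'. -/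
open CategoryTheory Limits

universe w v u

namespace CategoryTheory.Retract

variable {D : Type*} [Category D] {X Y Z : D}

def retractArrowComp (h : Retract Y Z) (f : X ⟶ Y) : RetractArrow f (f ≫ h.i) where
  i := Arrow.homMk (𝟙 X) h.i
  r := Arrow.homMk (𝟙 X) h.r (by simp)

end CategoryTheory.Retract

namespace MarkedObj

variable {C : Type u} [Category.{v} C] {K : Type w} [Category.{v} K] {F : K ⥤ C}

/-- The smallest marking of `Z` making `s` a morphism of marked objects. -/
def pushforward (Y : MarkedObj F) {Z : C} (s : Y.pt ⟶ Z) : MarkedObj F where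
  pt := Z
  marked k := {h | ∃ e ∈ Y.marked k, h = e ≫ s}
  comp_mem := by
    rintro k k' φ h ⟨e, he, rfl⟩
    exact ⟨F.map φ ≫ e, Y.comp_mem φ he, by simp⟩

variable (Y : MarkedObj F) {Z : C} (s : Y.pt ⟶ Z)

def toPushforward : Y ⟶ Y.pushforward s :=
  ⟨s, fun _ e he => ⟨e, he, rfl⟩⟩

def pushforwardDesc {W : MarkedObj F} (φ : Y ⟶ W) (r : Z ⟶ W.pt) (hsr : s ≫ r = φ.hom) :
    Y.pushforward s ⟶ W :=
  ⟨r, by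
    rintro k _ ⟨e, he, rfl⟩
    have := φ.pres he
    rwa [← hsr, ← Category.assoc] at this⟩

variable {s}

def retractPushforward (r : Z ⟶ Y.pt) (hsr : s ≫ r = 𝟙 Y.pt) : Retract Y (Y.pushforward s) where
  i := Y.toPushforward s
  r := Y.pushforwardDesc s (𝟙 Y) r hsr
  retract := Hom.ext hsr

end MarkedObj

/-- suppose the underlying map of `f : (X,E) ⟶ (Y,E')` is a retract
(in the arrow category, via the identity on domains) of a map `g : X ⟶ Z` in `C`,
witnessed by `s : Y ⟶ Z` and `r : Z ⟶ Y` with `f.hom ≫ s = g`, `g ≫ r = f.hom` and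
`s ≫ r = 𝟙`.  Let `Z'` be the marked object with underlying object `Z` in which a
map `F(k) ⟶ Z` is marked iff it is a marked map of `(Y,E')` composed with
`s : Y ⟶ Z`.  Then `f` is a retract, in the arrow category of the category of marked
objects, of the induced map `(X,E) ⟶ Z'`. -/
theorem markedObj_retract {C : Type u} [Category.{v} C] {K : Type w}
    [Category.{v} K] (F : K ⥤ C) (X Y : MarkedObj F) (f : X ⟶ Y)
    (Z : C) (g : X.pt ⟶ Z) (s : Y.pt ⟶ Z) (r : Z ⟶ Y.pt)
    (hs : f.hom ≫ s = g) (hsr : s ≫ r = 𝟙 Y.pt) :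
    letI Z' : MarkedObj F :=
      ⟨Z, fun k => {h | ∃ e ∈ Y.marked k, h = e ≫ s}, by
        rintro k k' φ h ⟨e, he, rfl⟩
        exact ⟨F.map φ ≫ e, Y.comp_mem φ he, by simp⟩⟩
    letI f' : X ⟶ Z' :=
      ⟨g, by
        intro k e he
        exact ⟨e ≫ f.hom, f.pres he, by rw [← hs, Category.assoc]⟩⟩
    ∃ (i : Arrow.mk f ⟶ Arrow.mk f') (p : Arrow.mk f' ⟶ Arrow.mk f),
      i ≫ p = 𝟙 (Arrow.mk f) := by
  subst hs
  -- Now `Z'` is `Y.pushforward s` and `f'` is `f ≫ Y.toPushforward s`, definitionally.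
  let h := (Y.retractPushforward r hsr).retractArrowComp f
  exact ⟨h.i, h.r, h.retract⟩
end

section
/- Suppose R : C → C with natural transformation t : id ⇒ R is a fibrant replacement functor, in which each t_X is a weak equivalence with R(X) fibrant. Define a map f of marked objects to be a weak equivalence if U(f) is a weak equivalence in C and R^m(f) reflects marked maps (where R^m is the induced marked fibrant replacement, marking a map F(k) → R(U(X)) iff it is homotopic to t_{U(X)} composed with a marked map of X, assuming J = ∅). Then this class of weak equivalences of marked objects satisfies the 2-out-of-3 property. -/
open CategoryTheory Limits

universe w v u

/-- Closure of a class of morphisms under retracts in the arrow category. -/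
def RetractClosed {C : Type u} [Category.{v} C] (P : MorphismProperty C) : Prop :=
  ∀ {X Y X' Y' : C} (f : X ⟶ Y) (g : X' ⟶ Y')
    (i : Arrow.mk f ⟶ Arrow.mk g) (p : Arrow.mk g ⟶ Arrow.mk f),
    i ≫ p = 𝟙 (Arrow.mk f) → P g → P f

/-- A model structure on a category: weak equivalences, cofibrations and fibrations
subject to the usual axioms (2-out-of-3, retracts, lifting, factorization). -/
class ModelStruct (C : Type u) [Category.{v} C] where
  W : MorphismProperty C
  Cof : MorphismProperty C
  Fib : MorphismProperty C
  w_of_iso : ∀ {X Y : C} (f : X ⟶ Y), IsIso f → W f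
  w_two_of_three : W.HasTwoOutOfThreeProperty
  w_retract : RetractClosed W
  cof_retract : RetractClosed Cof
  fib_retract : RetractClosed Fib
  lifting_cof_trivFib : ∀ ⦃A B X Y : C⦄ (i : A ⟶ B) (p : X ⟶ Y),
    Cof i → Fib p → W p → HasLiftingProperty i p
  lifting_trivCof_fib : ∀ ⦃A B X Y : C⦄ (i : A ⟶ B) (p : X ⟶ Y),
    Cof i → W i → Fib p → HasLiftingProperty i p
  factorization_cof_trivFib : ∀ {X Y : C} (f : X ⟶ Y),
    ∃ (Z : C) (i : X ⟶ Z) (p : Z ⟶ Y), Cof i ∧ Fib p ∧ W p ∧ i ≫ p = f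
  factorization_trivCof_fib : ∀ {X Y : C} (f : X ⟶ Y),
    ∃ (Z : C) (i : X ⟶ Z) (p : Z ⟶ Y), Cof i ∧ W i ∧ Fib p ∧ i ≫ p = f

variable {C : Type u} [Category.{v} C]

/-- An object is cofibrant if the map from the initial object is a cofibration. -/
def Cofibrant [ModelStruct C] [HasInitial C] (X : C) : Prop :=
  ModelStruct.Cof (initial.to X)

/-- An object is fibrant if the map to the terminal object is a fibration. -/
def Fibrant [ModelStruct C] [HasTerminal C] (X : C) : Prop :=
  ModelStruct.Fib (terminal.from X)

/-- Left homotopy of maps, via a (good) cylinder object. -/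
def LeftHomotopic [ModelStruct C] [HasBinaryCoproducts C] {X Y : C} (f g : X ⟶ Y) : Prop :=
  ∃ (Cl : C) (i₀ i₁ : X ⟶ Cl) (w : Cl ⟶ X) (H : Cl ⟶ Y),
    ModelStruct.Cof (coprod.desc i₀ i₁) ∧ ModelStruct.W w ∧
    i₀ ≫ w = 𝟙 X ∧ i₁ ≫ w = 𝟙 X ∧ i₀ ≫ H = f ∧ i₁ ≫ H = g


namespace MarkedObj

variable {C : Type u} [Category.{v} C] [ModelStruct C] [HasBinaryCoproducts C]
  {K : Type w} [Category.{v} K] {F : K ⥤ C}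

/-- The marking of the fibrant replacement `R^m(X)` (with `𝒥 = ∅`): a map
`F(k) ⟶ R(U(X))` is marked iff it is left homotopic to `t_{U(X)}` composed with a
marked map of `X`. -/
def rmMarked (R : C ⥤ C) (t : 𝟭 C ⟶ R) (X : MarkedObj F) :
    ∀ k : K, Set (F.obj k ⟶ R.obj X.pt) :=
  fun k => {h | ∃ e ∈ X.marked k, LeftHomotopic h (e ≫ t.app X.pt)}

/-- A map of marked objects is a weak equivalence if its underlying map is a weak
equivalence in `C` and `R^m(f)` reflects marked maps. -/
def MWE (R : C ⥤ C) (t : 𝟭 C ⟶ R) {X Y : MarkedObj F} (f : X ⟶ Y) : Prop :=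
  ModelStruct.W f.hom ∧
    ∀ (k : K) (h : F.obj k ⟶ R.obj X.pt),
      h ≫ R.map f.hom ∈ rmMarked R t Y k → h ∈ rmMarked R t X k

end MarkedObj


/-! Composition, and the case where `g` and `f ≫ g` are weak equivalences, only use that `R^m`
is functorial. When `f` and `f ≫ g` are, `R(f)` is a weak equivalence between fibrant objects,
so it induces a bijection on left homotopy classes out of the cofibrant `F(k)`: every map
`F(k) ⟶ R(Y)` is homotopic to one factoring through `R(f)`. As left homotopy out of a cofibrant
object is transitive, markings of `R^m` are closed under it, and reflection along `R(f ≫ g)`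
yields reflection along `R(g)`. -/

open HomotopicalAlgebra

attribute [local instance] ModelStruct.w_two_of_three

lemma RetractClosed.isStableUnderRetracts {C : Type u} [Category.{v} C] {P : MorphismProperty C}
    (hP : RetractClosed P) : P.IsStableUnderRetracts where
  of_retract h hg := hP _ _ h.i h.r h.retract hg

namespace ModelStruct

variable (C : Type u) [Category.{v} C] [ModelStruct C] [HasLimits C] [HasColimits C]

abbrev toModelCategory : ModelCategory C :=
  letI : CategoryWithWeakEquivalences C := ⟨W⟩
  letI : CategoryWithCofibrations C := ⟨Cof⟩
  letI : CategoryWithFibrations C := ⟨Fib⟩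
  { cm2 := w_two_of_three
    cm3a := w_retract.isStableUnderRetracts
    cm3b := fib_retract.isStableUnderRetracts
    cm3c := cof_retract.isStableUnderRetracts
    cm4a := fun i p _ _ _ => lifting_trivCof_fib i p (mem_cofibrations i)
      (mem_weakEquivalences i) (mem_fibrations p)
    cm4b := fun i p _ _ _ => lifting_cof_trivFib i p (mem_cofibrations i)
      (mem_fibrations p) (mem_weakEquivalences p)
    cm5a := ⟨fun f => by
      obtain ⟨Z, i, p, hi, hw, hp, fac⟩ := factorization_trivCof_fib f
      exact ⟨{ Z, i, p, fac, hi := ⟨hi, hw⟩, hp }⟩⟩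
    cm5b := ⟨fun f => by
      obtain ⟨Z, i, p, hi, hp, hw, fac⟩ := factorization_cof_trivFib f
      exact ⟨{ Z, i, p, fac, hi, hp := ⟨hp, hw⟩ }⟩⟩ }

end ModelStruct

section LeftHomotopy

variable {C : Type u} [Category.{v} C] [ModelStruct C]

lemma LeftHomotopic.postcomp [HasBinaryCoproducts C] {X Y Z : C} {f g : X ⟶ Y}
    (h : LeftHomotopic f g) (p : Y ⟶ Z) : LeftHomotopic (f ≫ p) (g ≫ p) := by
  obtain ⟨I, i₀, i₁, π, H, hi, hπ, i₀_π, i₁_π, rfl, rfl⟩ := h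
  exact ⟨I, i₀, i₁, π, H ≫ p, hi, hπ, i₀_π, i₁_π, by simp, by simp⟩

variable [HasLimits C] [HasColimits C]

attribute [local instance] ModelStruct.toModelCategory

lemma leftHomotopic_iff_leftHomotopyRel {X Y : C} (f g : X ⟶ Y) :
    LeftHomotopic f g ↔ LeftHomotopyRel f g := by
  constructor
  · rintro ⟨I, i₀, i₁, π, h, hi, hπ, i₀_π, i₁_π, h₀, h₁⟩
    exact ⟨{ I, i₀, i₁, π, i₀_π, i₁_π, weakEquivalence_π := ⟨hπ⟩ }, ⟨{ h, h₀, h₁ }⟩⟩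
  · intro hfg
    obtain ⟨P, hP, ⟨h⟩⟩ := hfg.exists_good_cylinder
    exact ⟨P.I, P.i₀, P.i₁, P.π, h.h, hP.cofibration_i.mem, P.weakEquivalence_π.mem,
      P.i₀_π, P.i₁_π, h.h₀, h.h₁⟩

lemma LeftHomotopic.symm {X Y : C} {f g : X ⟶ Y} (h : LeftHomotopic f g) :
    LeftHomotopic g f := by
  rw [leftHomotopic_iff_leftHomotopyRel] at h ⊢
  exact h.symm

lemma LeftHomotopic.trans {X Y : C} (hX : Cofibrant X) {f₀ f₁ f₂ : X ⟶ Y}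
    (h : LeftHomotopic f₀ f₁) (h' : LeftHomotopic f₁ f₂) : LeftHomotopic f₀ f₂ := by
  have : IsCofibrant X := ⟨hX⟩
  rw [leftHomotopic_iff_leftHomotopyRel] at h h' ⊢
  exact h.trans h'

lemma exists_comp_leftHomotopic_of_W {A X Y : C} (hA : Cofibrant A) (hX : Fibrant X)
    (hY : Fibrant Y) {q : X ⟶ Y} (hq : ModelStruct.W q) (h : A ⟶ Y) :
    ∃ h' : A ⟶ X, LeftHomotopic (h' ≫ q) h := by
  have : IsCofibrant A := ⟨hA⟩
  have : IsFibrant X := ⟨hX⟩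
  have : IsFibrant Y := ⟨hY⟩
  have : WeakEquivalence q := ⟨hq⟩
  obtain ⟨c, hc⟩ := (LeftHomotopyClass.postcomp_bijective_of_weakEquivalence A q).2 (.mk h)
  obtain ⟨h', rfl⟩ := c.mk_surjective
  exact ⟨h', (leftHomotopic_iff_leftHomotopyRel _ _).2
    ((LeftHomotopyClass.mk_eq_mk_iff _ _).1 hc)⟩

end LeftHomotopy

lemma CategoryTheory.MorphismProperty.map_mem_of_natTrans {C : Type u} [Category.{v} C]
    {W : MorphismProperty C} [W.HasTwoOutOfThreeProperty] {R : C ⥤ C} (t : 𝟭 C ⟶ R)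
    (ht : ∀ X, W (t.app X)) {X Y : C} {f : X ⟶ Y} (hf : W f) : W (R.map f) := by
  refine W.of_precomp (t.app X) (R.map f) (ht X) ?_
  rw [← t.naturality f]
  exact W.comp_mem _ _ hf (ht Y)

namespace MarkedObj

section

variable {C : Type u} [Category.{v} C] [ModelStruct C] [HasBinaryCoproducts C]
  {K : Type w} [Category.{v} K] {F : K ⥤ C} {R : C ⥤ C} {t : 𝟭 C ⟶ R}

lemma comp_map_mem_rmMarked {X Y : MarkedObj F} (u : X ⟶ Y) {k : K} {h : F.obj k ⟶ R.obj X.pt}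
    (hh : h ∈ rmMarked R t X k) : h ≫ R.map u.hom ∈ rmMarked R t Y k := by
  obtain ⟨e, he, hhe⟩ := hh
  refine ⟨e ≫ u.hom, u.pres he, ?_⟩
  simpa [← t.naturality] using hhe.postcomp (R.map u.hom)

lemma MWE.comp {X Y Z : MarkedObj F} {f : X ⟶ Y} {g : Y ⟶ Z} (hf : MWE R t f) (hg : MWE R t g) :
    MWE R t (f ≫ g) := by
  refine ⟨ModelStruct.W.comp_mem _ _ hf.1 hg.1, fun k h hh => hf.2 k h (hg.2 k _ ?_)⟩
  simpa using hh

lemma MWE.of_postcomp {X Y Z : MarkedObj F} {f : X ⟶ Y} {g : Y ⟶ Z} (hg : MWE R t g)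
    (hfg : MWE R t (f ≫ g)) : MWE R t f := by
  refine ⟨ModelStruct.W.of_postcomp _ _ hg.1 hfg.1, fun k h hh => hfg.2 k h ?_⟩
  simpa using comp_map_mem_rmMarked g hh

end

variable {C : Type u} [Category.{v} C] [ModelStruct C] [HasLimits C] [HasColimits C]
  {K : Type w} [Category.{v} K] {F : K ⥤ C} {R : C ⥤ C} {t : 𝟭 C ⟶ R}

lemma mem_rmMarked_of_leftHomotopic {X : MarkedObj F} {k : K} (hk : Cofibrant (F.obj k))
    {h h' : F.obj k ⟶ R.obj X.pt} (hhh' : LeftHomotopic h h') (hh' : h' ∈ rmMarked R t X k) :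
    h ∈ rmMarked R t X k := by
  obtain ⟨e, he, hh'e⟩ := hh'
  exact ⟨e, he, hhh'.trans hk hh'e⟩

lemma MWE.of_precomp (hF : ∀ k : K, Cofibrant (F.obj k)) (hRfib : ∀ X : C, Fibrant (R.obj X))
    (hRwe : ∀ X : C, ModelStruct.W (t.app X)) {X Y Z : MarkedObj F} {f : X ⟶ Y} {g : Y ⟶ Z}
    (hf : MWE R t f) (hfg : MWE R t (f ≫ g)) : MWE R t g := by
  refine ⟨ModelStruct.W.of_precomp _ _ hf.1 hfg.1, fun k h hh => ?_⟩
  obtain ⟨h', hh'⟩ := exists_comp_leftHomotopic_of_W (hF k) (hRfib X.pt) (hRfib Y.pt)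
    (MorphismProperty.map_mem_of_natTrans t hRwe hf.1) h
  have hh'fg : h' ≫ R.map (f ≫ g).hom ∈ rmMarked R t Z k :=
    mem_rmMarked_of_leftHomotopic (hF k) (by simpa using hh'.postcomp (R.map g.hom)) hh
  exact mem_rmMarked_of_leftHomotopic (hF k) hh'.symm
    (comp_map_mem_rmMarked f (hfg.2 k h' hh'fg))

end MarkedObj

open MarkedObj in
/-- given a fibrant replacement functor `(R, t)` on a model category
`C` and a functor `F : K ⥤ C` landing in cofibrant objects, the class of weak
equivalences of marked objects (maps whose underlying map is a weak equivalence and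
whose marked fibrant replacement reflects marked maps) satisfies 2-out-of-3. -/
theorem markedObj_weakEquiv_twoOutOfThree {C : Type u} [Category.{v} C]
    [HasLimits C] [HasColimits C] [ModelStruct C]
    {K : Type w} [Category.{v} K] (F : K ⥤ C)
    (hF : ∀ k : K, Cofibrant (F.obj k))
    (R : C ⥤ C) (t : 𝟭 C ⟶ R)
    (hRfib : ∀ X : C, Fibrant (R.obj X))
    (hRwe : ∀ X : C, ModelStruct.W (t.app X))
    {X Y Z : MarkedObj F} (f : X ⟶ Y) (g : Y ⟶ Z) :
    (MWE R t f → MWE R t g → MWE R t (f ≫ g)) ∧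
    (MWE R t g → MWE R t (f ≫ g) → MWE R t f) ∧
    (MWE R t f → MWE R t (f ≫ g) → MWE R t g) := by
  exact ⟨fun hf hg => hf.comp hg, fun hg hfg => hg.of_postcomp hfg,
    fun hf hfg => hf.of_precomp hF hRfib hRwe hfg⟩
end
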